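/- Let C be the ℤ-graded chain complex with generators Ω^k ⊗ 1_θ in degree 2k for all k ∈ ℤ, together with, for each a in a finite set S graded by gr : S → ℤ, generators Ω^k ⊗ η_a in degree 2k + gr(a) and Ω^k ⊗ 1_a in degree 2k + gr(a) + 1 (k ∈ ℤ), with differential D as in the equivariant Seiberg–Witten–Floer complex. Suppose the coefficient identities (n·n = 0 and the n·m − m·n relations) hold, so that D² = 0. Then the homology of C is isomorphic to ℤ[Ω, Ω⁻¹]; more precisely, H_j(C) ≅ ℤ if j is even and H_j(C) = 0 if j is odd, with the degree-2k class represented by Ω^k ⊗ 1_θ. -/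

import Mathlib

/-! Core definitions modelling the equivariant Seiberg–Witten–Floer complex
`CF^{SW,∞}_{*,U(1)}(Y,𝔰)`.  `S` is the (finite) set of irreducible monopoles,
`gr` the relative grading, `n a b` the counts of flowlines between irreducibles,
`m a c` the relative Euler numbers, `nth a = n_{aθ}` and `thn d = n_{θd}` the
counts involving the reducible θ. -/
inductive Gen (S : Type) : Type
  | eta : ℤ → S → Gen S
  | one : ℤ → S → Gen S
  | theta : ℤ → Gen S

namespace Gen

variable {S : Type} [Fintype S]

/-- The underlying ℤ-module of `CF^{SW,∞}`. -/
abbrev CF (S : Type) := Gen S →₀ ℤ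

/-- The power of Ω carried by a generator. -/
def kpow : Gen S → ℤ
  | eta k _ => k
  | one k _ => k
  | theta k => k

/-- The degree of a generator: `deg (Ω^k ⊗ η_a) = 2k + gr a`,
`deg (Ω^k ⊗ 1_a) = 2k + gr a + 1`, `deg (Ω^k ⊗ 1_θ) = 2k`. -/
def deg (gr : S → ℤ) : Gen S → ℤ
  | eta k a => 2 * k + gr a
  | one k a => 2 * k + gr a + 1
  | theta k => 2 * k

/-- The differential on generators. -/
noncomputable def Dgen (gr : S → ℤ) (n m : S → S → ℤ) (nth thn : S → ℤ) : Gen S → CF S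
  | eta k a =>
      (∑ b : S, Finsupp.single (eta k b) (if gr a - gr b = 1 then n a b else 0))
        + (∑ c : S, Finsupp.single (one k c) (if gr a - gr c = 2 then m a c else 0))
        - Finsupp.single (one (k - 1) a) 1
        + Finsupp.single (theta k) (if gr a = 1 then nth a else 0)
  | one k a => -∑ b : S, Finsupp.single (one k b) (if gr a - gr b = 1 then n a b else 0)
  | theta k => ∑ d : S, Finsupp.single (eta k d) (if gr d = -2 then thn d else 0)

/-- The differential `D` of `CF^{SW,∞}`. -/
noncomputable def Dop (gr : S → ℤ) (n m : S → S → ℤ) (nth thn : S → ℤ) :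
    CF S →ₗ[ℤ] CF S :=
  Finsupp.lift (CF S) ℤ (Gen S) (Dgen gr n m nth thn)

end Gen

namespace Gen

variable {S : Type} [Fintype S]

/-- The submodule of degree-`j` cycles of `CF^{SW,∞}`. -/
noncomputable def Zc (gr : S → ℤ) (n m : S → S → ℤ) (nth thn : S → ℤ) (j : ℤ) :
    Submodule ℤ (CF S) :=
  Finsupp.supported ℤ ℤ {g : Gen S | deg gr g = j} ⊓ LinearMap.ker (Dop gr n m nth thn)

/-- The submodule of degree-`j` boundaries of `CF^{SW,∞}`. -/
noncomputable def Bc (gr : S → ℤ) (n m : S → S → ℤ) (nth thn : S → ℤ) (j : ℤ) :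
    Submodule ℤ (CF S) :=
  Submodule.map (Dop gr n m nth thn) (Finsupp.supported ℤ ℤ {g : Gen S | deg gr g = j + 1})

/-!
With `h (Ω^k ⊗ 1_a) = -Ω^{k+1} ⊗ η_a`, the chain map `Φ = 1 - (D h + h D)` is homotopic to the
identity, fixes every `Ω^k ⊗ 1_θ`, and sends a generator over an irreducible `a` to a combination
of generators over irreducibles of grading `gr a - 2` plus a multiple of some `Ω^k ⊗ 1_θ`.
As `S` is finite, a power `Φ^N` maps the whole complex into the span of the `Ω^k ⊗ 1_θ`, where
the differential vanishes and there is one generator in each even degree and none in odd degrees.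
Since `D² = 0` forces `n_{θd} = 0`, both `D` and `h` are homogeneous, so the homotopy
`1 - Φ^N = D H + H D` computes the homology degree by degree.
-/

open Finsupp

theorem _root_.Finsupp.supported_le_comap_of_single_mem {R M X : Type*} [Semiring R]
    [AddCommMonoid M] [Module R M] (f : (X →₀ R) →ₗ[R] M) {s : Set X} {p : Submodule R M}
    (hf : ∀ x ∈ s, f (single x 1) ∈ p) : supported R R s ≤ p.comap f := by
  rw [supported_eq_span_single, Submodule.span_le]
  rintro _ ⟨x, hx, rfl⟩
  exact hf x hx

theorem _root_.Finsupp.single_ite_mem_supported {R M X : Type*} [Semiring R] [AddCommMonoid M]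
    [Module R M] {s : Set X} {x : X} {P : Prop} [Decidable P] {c : M} (h : P → x ∈ s) :
    single x (if P then c else 0) ∈ supported M R s := by
  split_ifs with hP
  · exact single_mem_supported R c (h hP)
  · simp

theorem _root_.Commute.one_sub_homotopy {R : Type*} [Ring R] {D : R} (hD : D * D = 0) (h : R) :
    Commute D (1 - (D * h + h * D)) := by
  have hDDx : ∀ x : R, D * (D * x) = 0 := fun x => by rw [← mul_assoc, hD, zero_mul]
  have hxDD : ∀ x : R, x * D * D = 0 := fun x => by rw [mul_assoc, hD, mul_zero]
  simp only [Commute, SemiconjBy, mul_sub, sub_mul, mul_add, add_mul, mul_one, one_mul, hDDx,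
    hxDD, zero_add, add_zero, mul_assoc]

theorem _root_.one_sub_pow_eq_homotopy {R : Type*} [Ring R] {D : R} (hD : D * D = 0) (h : R)
    (N : ℕ) :
    1 - (1 - (D * h + h * D)) ^ N
      = D * ((∑ i ∈ Finset.range N, (1 - (D * h + h * D)) ^ i) * h)
        + (∑ i ∈ Finset.range N, (1 - (D * h + h * D)) ^ i) * h * D := by
  have hG : Commute D (∑ i ∈ Finset.range N, (1 - (D * h + h * D)) ^ i) :=
    Commute.sum_right _ _ _ fun i _ => (Commute.one_sub_homotopy hD h).pow_right i
  rw [← geom_sum_mul_neg, sub_sub_cancel, ← mul_assoc, hG.eq]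
  noncomm_ring

def homogeneous (gr : S → ℤ) (j : ℤ) : Submodule ℤ (CF S) :=
  supported ℤ ℤ {g | deg gr g = j}

/-- Inverts the `-Ω^{k-1} ⊗ 1_a` component of `D (Ω^k ⊗ η_a)`. -/
noncomputable def contractionGen : Gen S → CF S
  | one k a => -single (eta (k + 1) a) 1
  | _ => 0

noncomputable def contraction : Module.End ℤ (CF S) :=
  Finsupp.lift (CF S) ℤ (Gen S) contractionGen

noncomputable def Phi (gr : S → ℤ) (n m : S → S → ℤ) (nth thn : S → ℤ) :
    Module.End ℤ (CF S) :=
  1 - (Dop gr n m nth thn * contraction + contraction * Dop gr n m nth thn)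

def weight (gr : S → ℤ) : Gen S → WithBot ℤ
  | eta _ a => gr a
  | one _ a => gr a
  | theta _ => ⊥

def filtration (gr : S → ℤ) (r : ℤ) : Submodule ℤ (CF S) :=
  supported ℤ ℤ {g | weight gr g < r}

def thetaSpan (S : Type) : Submodule ℤ (CF S) :=
  supported ℤ ℤ (Set.range theta)

section

variable {gr : S → ℤ} {n m : S → S → ℤ} {nth thn : S → ℤ}

theorem Dop_single (g : Gen S) (c : ℤ) :
    Dop gr n m nth thn (single g c) = c • Dgen gr n m nth thn g := by
  simp [Dop]

theorem Dgen_eta_apply_one_pred [DecidableEq S] (k : ℤ) (a d : S) :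
    Dgen gr n m nth thn (eta k a) (one (k - 1) d) = -if a = d then 1 else 0 := by
  classical
  simp [Dgen, single_apply]

/-- The `Ω^{k-1} ⊗ 1_d` coordinate of `D² (Ω^k ⊗ 1_θ)` is `-n_{θd}`. -/
theorem thn_eq_zero_of_Dop_comp_self (hD2 : Dop gr n m nth thn ∘ₗ Dop gr n m nth thn = 0)
    {d : S} (hd : gr d = -2) : thn d = 0 := by
  classical
  have h := congr($hD2 (single (theta 0) 1) (one (0 - 1) d))
  simp only [LinearMap.comp_apply, Dop_single, one_smul, Dgen.eq_3, map_sum, finsetSum_apply,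
    Finsupp.smul_apply, Dgen_eta_apply_one_pred] at h
  simpa [hd] using h

omit [Fintype S] in
theorem single_mem_homogeneous {g : Gen S} {j c : ℤ} (h : deg gr g = j) :
    single g c ∈ homogeneous gr j :=
  single_mem_supported ℤ c h

theorem Dgen_theta (hthn : ∀ d, gr d = -2 → thn d = 0) (k : ℤ) :
    Dgen gr n m nth thn (theta k) = 0 :=
  Finset.sum_eq_zero fun d _ => by by_cases hd : gr d = -2 <;> simp [hd, hthn]

theorem Dgen_mem_homogeneous (hthn : ∀ d, gr d = -2 → thn d = 0) {g : Gen S} {j : ℤ}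
    (hg : deg gr g = j) : Dgen gr n m nth thn g ∈ homogeneous gr (j - 1) := by
  cases g with
  | theta k => rw [Dgen_theta hthn]; exact zero_mem _
  | eta k a =>
    refine add_mem (sub_mem (add_mem (Submodule.sum_mem _ fun b _ => ?_)
      (Submodule.sum_mem _ fun c _ => ?_)) (single_mem_homogeneous ?_)) ?_
    all_goals try refine single_ite_mem_supported fun h => ?_
    all_goals simp only [Set.mem_ofPred_eq, deg] at hg ⊢; omega
  | one k a =>
    refine neg_mem (Submodule.sum_mem _ fun b _ => single_ite_mem_supported fun h => ?_)
    simp only [Set.mem_ofPred_eq, deg] at hg ⊢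
    omega

omit [Fintype S] in
theorem contraction_single (g : Gen S) (c : ℤ) :
    contraction (single g c) = c • contractionGen g := by
  simp [contraction]

theorem Phi_single_theta (k : ℤ) :
    Phi gr n m nth thn (single (theta k) 1) = single (theta k) 1 := by
  simp [Phi, Dop_single, contraction_single, contractionGen, Dgen]

theorem Phi_single_eta (k : ℤ) (a : S) :
    Phi gr n m nth thn (single (eta k a) 1)
      = ∑ c, single (eta (k + 1) c) (if gr a - gr c = 2 then m a c else 0) := by
  simp only [Phi, LinearMap.sub_apply, Module.End.one_apply, LinearMap.add_apply,
    Module.End.mul_apply, contraction_single, contractionGen, Dop_single, Dgen, map_add, map_sub,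
    map_sum, smul_neg, smul_zero, smul_single, smul_eq_mul, mul_one, one_smul, map_zero,
    sub_add_cancel, Finset.sum_const_zero, Finset.sum_neg_distrib]
  abel

theorem Phi_single_one (k : ℤ) (a : S) :
    Phi gr n m nth thn (single (one k a) 1)
      = ∑ c, single (one (k + 1) c) (if gr a - gr c = 2 then m a c else 0)
        + single (theta (k + 1)) (if gr a = 1 then nth a else 0) := by
  simp only [Phi, LinearMap.sub_apply, Module.End.one_apply, LinearMap.add_apply,
    Module.End.mul_apply, contraction_single, contractionGen, Dop_single, Dgen, map_sum, smul_neg,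
    smul_single, smul_eq_mul, mul_one, one_smul, map_neg, add_sub_cancel_right,
    Finset.sum_neg_distrib]
  abel

theorem Dop_mem_homogeneous (hthn : ∀ d, gr d = -2 → thn d = 0) {j : ℤ} {x : CF S}
    (hx : x ∈ homogeneous gr j) : Dop gr n m nth thn x ∈ homogeneous gr (j - 1) :=
  supported_le_comap_of_single_mem (p := homogeneous gr (j - 1)) (Dop gr n m nth thn)
    (fun g hg => by rw [Dop_single, one_smul]; exact Dgen_mem_homogeneous hthn hg) hx

omit [Fintype S] in
theorem contraction_mem_homogeneous {j : ℤ} {x : CF S} (hx : x ∈ homogeneous gr j) :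
    contraction x ∈ homogeneous gr (j + 1) := by
  refine supported_le_comap_of_single_mem (p := homogeneous gr (j + 1)) contraction
    (fun g (hg : deg gr g = j) => ?_) hx
  rw [contraction_single, one_smul]
  cases g with
  | one k a =>
    refine neg_mem (single_mem_homogeneous ?_)
    simp only [deg] at hg ⊢
    omega
  | _ => exact zero_mem _

theorem Phi_mem_homogeneous (hthn : ∀ d, gr d = -2 → thn d = 0) {j : ℤ} {x : CF S}
    (hx : x ∈ homogeneous gr j) : Phi gr n m nth thn x ∈ homogeneous gr j := by
  have hDh : Dop gr n m nth thn (contraction x) ∈ homogeneous gr j := by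
    simpa using Dop_mem_homogeneous hthn (contraction_mem_homogeneous hx)
  have hhD : contraction (Dop gr n m nth thn x) ∈ homogeneous gr j := by
    simpa using contraction_mem_homogeneous (Dop_mem_homogeneous hthn hx)
  exact sub_mem hx (add_mem hDh hhD)

theorem pow_Phi_mem_homogeneous (hthn : ∀ d, gr d = -2 → thn d = 0) (N : ℕ) {j : ℤ}
    {x : CF S} (hx : x ∈ homogeneous gr j) : (Phi gr n m nth thn ^ N) x ∈ homogeneous gr j := by
  induction N with
  | zero => exact hx
  | succ N ih => rw [pow_succ', Module.End.mul_apply]; exact Phi_mem_homogeneous hthn ih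

theorem Phi_mem_filtration {r : ℤ} {x : CF S} (hx : x ∈ filtration gr r) :
    Phi gr n m nth thn x ∈ filtration gr (r - 1) := by
  refine supported_le_comap_of_single_mem (p := filtration gr (r - 1)) (Phi gr n m nth thn)
    (fun g (hg : weight gr g < r) => ?_) hx
  cases g with
  | theta k =>
    rw [Phi_single_theta]
    exact single_mem_supported ℤ _ (WithBot.bot_lt_coe _)
  | eta k a =>
    rw [Phi_single_eta]
    exact Submodule.sum_mem _ fun c _ => single_ite_mem_supported fun hac => by
      simp only [Set.mem_ofPred_eq, weight, WithBot.coe_lt_coe] at hg ⊢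
      omega
  | one k a =>
    rw [Phi_single_one]
    refine add_mem (Submodule.sum_mem _ fun c _ => single_ite_mem_supported fun hac => ?_)
      (single_mem_supported ℤ _ (WithBot.bot_lt_coe _))
    simp only [Set.mem_ofPred_eq, weight, WithBot.coe_lt_coe] at hg ⊢
    omega

theorem pow_Phi_mem_filtration (N : ℕ) {r : ℤ} {x : CF S} (hx : x ∈ filtration gr r) :
    (Phi gr n m nth thn ^ N) x ∈ filtration gr (r - N) := by
  induction N with
  | zero => simpa using hx
  | succ N ih =>
    rw [pow_succ', Module.End.mul_apply, Nat.cast_succ, ← sub_sub]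
    exact Phi_mem_filtration ih

omit [Fintype S] in
theorem filtration_le_thetaSpan {r : ℤ} (h : ∀ a, r ≤ gr a) :
    filtration gr r ≤ thetaSpan S := by
  refine supported_mono fun g (hg : weight gr g < r) => ?_
  cases g with
  | theta k => exact ⟨k, rfl⟩
  | _ k a => exact absurd (WithBot.coe_lt_coe.mp hg) (not_lt.mpr (h a))

omit [Fintype S] in
theorem filtration_eq_top {r : ℤ} (h : ∀ a, gr a < r) : filtration gr r = ⊤ := by
  refine eq_top_iff.mpr fun x _ => (mem_supported' ℤ x).mpr fun g hg => absurd ?_ hg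
  cases g with
  | theta k => exact WithBot.bot_lt_coe r
  | _ k a => exact WithBot.coe_lt_coe.mpr (h a)

variable (gr n m nth thn) in
theorem exists_pow_Phi_mem_thetaSpan :
    ∃ N : ℕ, ∀ x, (Phi gr n m nth thn ^ N) x ∈ thetaSpan S := by
  obtain ⟨L, hL⟩ := (Set.finite_range gr).bddBelow
  obtain ⟨U, hU⟩ := (Set.finite_range gr).bddAbove
  have htop : filtration gr (U + 1) = ⊤ := filtration_eq_top fun a => by
    have := hU ⟨a, rfl⟩; omega
  refine ⟨(U + 1 - L).toNat, fun x => filtration_le_thetaSpan (fun a => ?_)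
    (pow_Phi_mem_filtration _ (htop ▸ Submodule.mem_top))⟩
  have := hL ⟨a, rfl⟩
  omega

omit [Fintype S] in
theorem exists_eq_theta_of_apply_ne_zero {j : ℤ} {x : CF S} (hT : x ∈ thetaSpan S)
    (hx : x ∈ homogeneous gr j) {g : Gen S} (hg : x g ≠ 0) :
    ∃ k, g = theta k ∧ 2 * k = j := by
  obtain ⟨k, rfl⟩ := hT (mem_support_iff.mpr hg)
  exact ⟨k, rfl, hx (mem_support_iff.mpr hg)⟩

omit [Fintype S] in
theorem eq_zero_of_mem_thetaSpan_of_odd {j : ℤ} (hj : Odd j) {x : CF S} (hT : x ∈ thetaSpan S)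
    (hx : x ∈ homogeneous gr j) : x = 0 := by
  ext g
  by_contra hg
  obtain ⟨k, -, rfl⟩ := exists_eq_theta_of_apply_ne_zero hT hx hg
  exact Int.not_odd_iff_even.mpr (even_two_mul k) hj

omit [Fintype S] in
theorem eq_single_of_mem_thetaSpan {k : ℤ} {x : CF S} (hT : x ∈ thetaSpan S)
    (hx : x ∈ homogeneous gr (2 * k)) : x = single (theta k) (x (theta k)) := by
  ext g
  by_cases hgk : g = theta k
  · rw [hgk, single_eq_same]
  rw [single_eq_of_ne hgk]
  by_contra hg
  obtain ⟨k', rfl, hk'⟩ := exists_eq_theta_of_apply_ne_zero hT hx hg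
  exact hgk (by rw [show k' = k by omega])

theorem pow_Phi_single_theta (N : ℕ) (k : ℤ) :
    (Phi gr n m nth thn ^ N) (single (theta k) 1) = single (theta k) 1 := by
  rw [Module.End.pow_apply]
  exact Function.IsFixedPt.iterate (Phi_single_theta k) N

theorem single_theta_mem_Zc (hD2 : Dop gr n m nth thn ∘ₗ Dop gr n m nth thn = 0) (k : ℤ) :
    single (theta k) 1 ∈ Zc gr n m nth thn (2 * k) := by
  refine ⟨single_mem_homogeneous rfl, ?_⟩
  rw [SetLike.mem_coe, LinearMap.mem_ker, Dop_single, one_smul,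
    Dgen_theta fun d => thn_eq_zero_of_Dop_comp_self hD2]

theorem sub_pow_Phi_mem_Bc (hD2 : Dop gr n m nth thn ∘ₗ Dop gr n m nth thn = 0) (N : ℕ)
    {j : ℤ} {z : CF S} (hz : z ∈ Zc gr n m nth thn j) :
    z - (Phi gr n m nth thn ^ N) z ∈ Bc gr n m nth thn j := by
  obtain ⟨hzj, hDz : Dop gr n m nth thn z = 0⟩ := hz
  have hthn : ∀ d, gr d = -2 → thn d = 0 := fun d => thn_eq_zero_of_Dop_comp_self hD2
  have h := congr($(one_sub_pow_eq_homotopy hD2 contraction N) z)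
  rw [← Phi] at h
  simp only [LinearMap.sub_apply, LinearMap.add_apply, Module.End.mul_apply, Module.End.one_apply,
    hDz, map_zero, add_zero] at h
  rw [h]
  refine ⟨_, ?_, rfl⟩
  rw [LinearMap.sum_apply]
  exact Submodule.sum_mem _ fun i _ =>
    pow_Phi_mem_homogeneous hthn i (contraction_mem_homogeneous hzj)

theorem eq_zero_of_smul_single_theta_mem_Bc (hD2 : Dop gr n m nth thn ∘ₗ Dop gr n m nth thn = 0)
    {k c : ℤ} (hc : c • single (theta k) 1 ∈ Bc gr n m nth thn (2 * k)) : c = 0 := by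
  obtain ⟨y, hy, hDy⟩ := hc
  obtain ⟨N, hN⟩ := exists_pow_Phi_mem_thetaSpan gr n m nth thn
  have hthn : ∀ d, gr d = -2 → thn d = 0 := fun d => thn_eq_zero_of_Dop_comp_self hD2
  have hy0 : (Phi gr n m nth thn ^ N) y = 0 :=
    eq_zero_of_mem_thetaSpan_of_odd (odd_two_mul_add_one k) (hN y)
      (pow_Phi_mem_homogeneous hthn N hy)
  have hcomm : Commute (Dop gr n m nth thn) (Phi gr n m nth thn ^ N) :=
    (Commute.one_sub_homotopy hD2 contraction).pow_right N
  have h : c • single (theta k) 1 = (0 : CF S) :=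
    calc c • single (theta k) 1 = (Phi gr n m nth thn ^ N) (c • single (theta k) 1) := by
          rw [map_smul, pow_Phi_single_theta]
      _ = Dop gr n m nth thn ((Phi gr n m nth thn ^ N) y) := by
          rw [← hDy]; exact congr($hcomm.eq y).symm
      _ = 0 := by rw [hy0, map_zero]
  simpa using congr($h (theta k))

end

theorem homology_CFinfty_general (gr : S → ℤ) (n m : S → S → ℤ) (nth thn : S → ℤ)
    (hD2 : Dop gr n m nth thn ∘ₗ Dop gr n m nth thn = 0) :
    (∀ j : ℤ, Odd j → Zc gr n m nth thn j ≤ Bc gr n m nth thn j) ∧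
    (∀ k : ℤ, ∃ z : CF S, z ∈ Zc gr n m nth thn (2 * k) ∧ z (Gen.theta k) = 1 ∧
      (∀ w ∈ Zc gr n m nth thn (2 * k), ∃ c : ℤ, w - c • z ∈ Bc gr n m nth thn (2 * k)) ∧
      (∀ c : ℤ, c • z ∈ Bc gr n m nth thn (2 * k) → c = 0)) := by
  have hthn : ∀ d, gr d = -2 → thn d = 0 := fun d => thn_eq_zero_of_Dop_comp_self hD2
  obtain ⟨N, hN⟩ := exists_pow_Phi_mem_thetaSpan gr n m nth thn
  refine ⟨fun j hj z hz => ?_, fun k => ⟨single (theta k) 1, single_theta_mem_Zc hD2 k,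
    single_eq_same, fun w hw => ?_, fun c hc => eq_zero_of_smul_single_theta_mem_Bc hD2 hc⟩⟩
  · have hz0 : (Phi gr n m nth thn ^ N) z = 0 :=
      eq_zero_of_mem_thetaSpan_of_odd hj (hN z) (pow_Phi_mem_homogeneous hthn N hz.1)
    simpa [hz0] using sub_pow_Phi_mem_Bc hD2 N hz
  · have hw' := eq_single_of_mem_thetaSpan (hN w) (pow_Phi_mem_homogeneous hthn N hw.1)
    refine ⟨(Phi gr n m nth thn ^ N) w (theta k), ?_⟩
    rw [smul_single_one, ← hw']
    exact sub_pow_Phi_mem_Bc hD2 N hw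

/-- assuming the coefficient identities (so that `D ∘ D = 0`), the
homology of `CF^{SW,∞}` is `ℤ[Ω, Ω⁻¹]`: it vanishes in odd degrees, and in each even
degree `2k` it is an infinite cyclic group generated by a cycle whose `Ω^k ⊗ 1_θ`
coordinate equals `1` (the class represented by `Ω^k ⊗ 1_θ`). -/
theorem homology_CFinfty (gr : S → ℤ) (n m : S → S → ℤ) (nth thn : S → ℤ)
    (hnn : ∀ a c : S, gr a - gr c = 2 →
      (∑ b : S, (if gr a - gr b = 1 then n a b * n b c else 0)) = 0)
    (hntheta : ∀ a : S, gr a = 2 →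
      (∑ b : S, (if gr a - gr b = 1 then n a b * nth b else 0)) = 0)
    (hnm : ∀ a d : S, gr a - gr d = 3 → ¬(gr a = 1 ∧ gr d = -2) →
      (∑ c : S, (if gr a - gr c = 1 then n a c * m c d else 0))
        - (∑ c : S, (if gr c - gr d = 1 then m a c * n c d else 0)) = 0)
    (hnmtheta : ∀ a d : S, gr a = 1 → gr d = -2 →
      (∑ c : S, (if gr c = 0 then n a c * m c d else 0)) + nth a * thn d
        - (∑ c : S, (if gr c = -1 then m a c * n c d else 0)) = 0)
    (hD2 : Dop gr n m nth thn ∘ₗ Dop gr n m nth thn = 0) :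
    (∀ j : ℤ, Odd j → Zc gr n m nth thn j ≤ Bc gr n m nth thn j) ∧
    (∀ k : ℤ, ∃ z : CF S, z ∈ Zc gr n m nth thn (2 * k) ∧ z (Gen.theta k) = 1 ∧
      (∀ w ∈ Zc gr n m nth thn (2 * k), ∃ c : ℤ, w - c • z ∈ Bc gr n m nth thn (2 * k)) ∧
      (∀ c : ℤ, c • z ∈ Bc gr n m nth thn (2 * k) → c = 0)) :=
  homology_CFinfty_general gr n m nth thn hD2

end Gen
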